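/- Let p be prime and (A_p, f) affine connected of order p, with n the order of t mod p. Each orbit of Inn(A_p) on A_p × A_p equals A(k) = { (i, i + t^l k) : i ∈ Z_p, 1 ≤ l ≤ n } for some k ∈ Z_p, and A(k₁) = A(k₂) if and only if k₁ and k₂ lie in the same coset of the subgroup ⟨t⟩ ≤ Z_p^* (or k₁ = k₂ = 0). In particular there are exactly 1 + (p-1)/n distinct orbits. -/

import Mathlib

/-!
The generators `x ↦ t x + (1 - t) j` of `Inn(A_p)` are affine with multiplier `t`, and since
`1 - t` is invertible they also produce every translation; hence `Inn(A_p)` is exactly the group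
of maps `x ↦ t^l x + c`. Such a map moves `(x, y)` to a pair with difference `t^l (y - x)`, and
every pair with that difference is reached by a suitable `c`. So the orbits on pairs are the
preimages under `(x, y) ↦ y - x` of the orbits of `⟨t⟩` on `Z_p`, namely `{0}` and the
`(p - 1) / n` cosets of `⟨t⟩` in `Z_p^*`.
-/

open MulAction Subgroup

section Orbits

variable {G : Type*} [Group G]

theorem IsOfFinOrder.exists_pow_eq_of_mem_zpowers {x g : G} (hx : IsOfFinOrder x)
    (hg : g ∈ zpowers x) : ∃ l, 1 ≤ l ∧ l ≤ orderOf x ∧ x ^ l = g := by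
  obtain ⟨l, rfl : x ^ l = g⟩ := hx.mem_powers_iff_mem_zpowers.mpr hg
  rcases Nat.eq_zero_or_pos (l % orderOf x) with h0 | h0
  · refine ⟨orderOf x, hx.orderOf_pos, le_rfl, ?_⟩
    rw [pow_orderOf_eq_one, ← pow_mod_orderOf, h0, pow_zero]
  · exact ⟨l % orderOf x, h0, (Nat.mod_lt _ hx.orderOf_pos).le, pow_mod_orderOf x l⟩

theorem MulAction.card_range_orbit {α : Type*} [MulAction G α] :
    Nat.card (Set.range (orbit G : α → Set α)) = Nat.card (orbitRel.Quotient G α) := by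
  rw [← Nat.card_range_of_injective orbitRel.Quotient.orbit_injective,
    ← Quotient.mk''_surjective.range_comp]
  rfl

theorem Subgroup.card_range_orbit_eq_index (H : Subgroup G) :
    Nat.card (Set.range (orbit H : G → Set G)) = H.index := by
  rw [MulAction.card_range_orbit]
  exact Nat.card_congr (QuotientGroup.quotientRightRelEquivQuotientLeftRel H)

end Orbits

section Units

variable {M : Type*} [Monoid M] {u : Mˣ}

theorem mem_orbit_zpowers_iff_exists_pow (hu : IsOfFinOrder u) {k x : M} :
    x ∈ orbit (zpowers u) k ↔ ∃ l : ℕ, x = (u : M) ^ l * k := by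
  constructor
  · rintro ⟨⟨g, hg⟩, rfl⟩
    obtain ⟨l, rfl : u ^ l = g⟩ := hu.mem_powers_iff_mem_zpowers.mpr hg
    exact ⟨l, by simp [Units.smul_def]⟩
  · rintro ⟨l, rfl⟩
    exact ⟨⟨u ^ l, pow_mem (mem_zpowers u) l⟩, by simp [Units.smul_def]⟩

theorem mem_orbit_zpowers_iff_exists_pow_le_orderOf (hu : IsOfFinOrder u) {k x : M} :
    x ∈ orbit (zpowers u) k ↔ ∃ l, 1 ≤ l ∧ l ≤ orderOf u ∧ x = (u : M) ^ l * k := by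
  constructor
  · rintro ⟨⟨g, hg⟩, rfl⟩
    obtain ⟨l, hl1, hln, rfl⟩ := hu.exists_pow_eq_of_mem_zpowers hg
    exact ⟨l, hl1, hln, by simp [Units.smul_def]⟩
  · rintro ⟨l, -, -, rfl⟩
    exact ⟨⟨u ^ l, pow_mem (mem_zpowers u) l⟩, by simp [Units.smul_def]⟩

end Units

section GroupWithZero

variable {G₀ : Type*} [GroupWithZero G₀] (H : Subgroup G₀ˣ)

theorem orbit_coe_unit (u : G₀ˣ) : orbit H (u : G₀) = Units.val '' orbit H u := by
  ext x
  simp only [mem_orbit_iff, Set.mem_image]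
  constructor
  · rintro ⟨h, rfl⟩
    exact ⟨h • u, ⟨h, rfl⟩, rfl⟩
  · rintro ⟨_, ⟨h, rfl⟩, rfl⟩
    exact ⟨h, rfl⟩

theorem orbit_zero_eq_singleton : orbit H (0 : G₀) = {0} := by
  ext x
  simpa [mem_orbit_iff, eq_comm] using fun _ => ⟨1, H.one_mem⟩

theorem card_range_orbit_eq_index_add_one [Finite G₀] :
    Nat.card (Set.range (orbit H : G₀ → Set G₀)) = H.index + 1 := by
  have hrange : Set.range (orbit H : G₀ → Set G₀) =
      insert {0} (Set.image Units.val '' Set.range (orbit H : G₀ˣ → Set G₀ˣ)) := by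
    ext S
    constructor
    · rintro ⟨k, rfl⟩
      rcases eq_or_ne k 0 with rfl | hk
      · exact .inl (orbit_zero_eq_singleton H)
      · exact .inr ⟨_, ⟨Units.mk0 k hk, rfl⟩, (orbit_coe_unit H _).symm⟩
    · rintro (rfl | ⟨_, ⟨u, rfl⟩, rfl⟩)
      · exact ⟨0, orbit_zero_eq_singleton H⟩
      · exact ⟨u, orbit_coe_unit H u⟩
  have hzero : ({0} : Set G₀) ∉ Set.image Units.val '' Set.range (orbit H : G₀ˣ → Set G₀ˣ) := by
    rintro ⟨_, ⟨u, rfl⟩, h⟩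
    exact u.ne_zero (h.subset ⟨u, mem_orbit_self u, rfl⟩)
  rw [hrange, Nat.card_coe_set_eq, Set.ncard_insert_of_notMem hzero (Set.toFinite _),
    ← Nat.card_coe_set_eq, Nat.card_image_of_injective (Set.image_injective.mpr Units.val_injective),
    card_range_orbit_eq_index]

end GroupWithZero

section Affine

variable {R : Type*} [Ring R]

def affinePerm (a : Rˣ) (c : R) : Equiv.Perm R := (Units.mulLeft a).trans (Equiv.addRight c)

@[simp]
theorem affinePerm_apply (a : Rˣ) (c x : R) : affinePerm a c x = a * x + c := rfl

theorem affinePerm_mul (a b : Rˣ) (c d : R) :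
    affinePerm a c * affinePerm b d = affinePerm (a * b) (a * d + c) := by
  ext x
  simp [mul_add, mul_assoc, add_assoc]

theorem affinePerm_one_zero : affinePerm (1 : Rˣ) 0 = 1 := by
  ext x
  simp

theorem affinePerm_inv (a : Rˣ) (c : R) :
    (affinePerm a c)⁻¹ = affinePerm a⁻¹ (-(↑a⁻¹ * c)) := by
  refine (eq_inv_of_mul_eq_one_right ?_).symm
  rw [affinePerm_mul, mul_inv_cancel, mul_neg, ← mul_assoc, Units.mul_inv, one_mul, neg_add_cancel,
    affinePerm_one_zero]

theorem affinePerm_zero_eq_toPermHom (a : Rˣ) : affinePerm a 0 = toPermHom Rˣ R a := by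
  ext x
  simp [Units.smul_def]

def affineSubgroup (H : Subgroup Rˣ) : Subgroup (Equiv.Perm R) where
  carrier := {σ | ∃ a ∈ H, ∃ c, σ = affinePerm a c}
  one_mem' := ⟨1, H.one_mem, 0, affinePerm_one_zero.symm⟩
  mul_mem' := by
    rintro _ _ ⟨a, ha, c, rfl⟩ ⟨b, hb, d, rfl⟩
    exact ⟨a * b, H.mul_mem ha hb, a * d + c, affinePerm_mul a b c d⟩
  inv_mem' := by
    rintro _ ⟨a, ha, c, rfl⟩
    exact ⟨a⁻¹, H.inv_mem ha, _, affinePerm_inv a c⟩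

theorem orbit_affineSubgroup (H : Subgroup Rˣ) (q : R × R) :
    orbit (affineSubgroup H) q = (fun r : R × R => r.2 - r.1) ⁻¹' orbit H (q.2 - q.1) := by
  ext r
  simp only [mem_orbit_iff, Set.mem_preimage]
  constructor
  · rintro ⟨⟨_, a, ha, c, rfl⟩, rfl⟩
    refine ⟨⟨a, ha⟩, ?_⟩
    show a * (q.2 - q.1) = (a * q.2 + c) - (a * q.1 + c)
    noncomm_ring
  · rintro ⟨⟨a, ha⟩, h⟩
    refine ⟨⟨affinePerm a (r.1 - a * q.1), a, ha, _, rfl⟩, Prod.ext ?_ ?_⟩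
    · show a * q.1 + (r.1 - a * q.1) = r.1
      abel
    · change a * (q.2 - q.1) = r.2 - r.1 at h
      show a * q.2 + (r.1 - a * q.1) = r.2
      rw [← eq_sub_iff_add_eq.mp h]
      noncomm_ring

variable {K : Type*} [DivisionRing K]

theorem setOf_affine_generator_eq_range (u : Kˣ) :
    {σ : Equiv.Perm K | ∃ j, ∀ x, σ x = u * x + (1 - u) * j} =
      Set.range fun j => affinePerm u ((1 - u) * j) := by
  ext σ
  exact exists_congr fun j => by rw [eq_comm, Equiv.ext_iff]; rfl

theorem closure_affine_generators_eq {u : Kˣ} (hu : (u : K) ≠ 1) :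
    closure {σ : Equiv.Perm K | ∃ j, ∀ x, σ x = u * x + (1 - u) * j} =
      affineSubgroup (zpowers u) := by
  rw [setOf_affine_generator_eq_range]
  refine le_antisymm (closure_le _ |>.mpr ?_) ?_
  · rintro _ ⟨j, rfl⟩
    exact ⟨u, mem_zpowers u, _, rfl⟩
  · rintro _ ⟨_, ⟨m, rfl⟩, c, rfl⟩
    have hgen (j : K) :
        affinePerm u ((1 - u) * j) ∈ closure (Set.range fun j => affinePerm u ((1 - u) * j)) :=
      subset_closure ⟨j, rfl⟩
    have hmul : affinePerm u 0 ∈ closure (Set.range fun j => affinePerm u ((1 - u) * j)) := by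
      simpa using hgen 0
    have htranslation :
        affinePerm 1 c = affinePerm u ((1 - u) * ((1 - (u : K))⁻¹ * c)) * (affinePerm u 0)⁻¹ := by
      rw [eq_mul_inv_iff_mul_eq, affinePerm_mul, one_mul, mul_zero, zero_add,
        ← mul_assoc, mul_inv_cancel₀ (sub_ne_zero.mpr hu.symm), one_mul]
    have hsplit : affinePerm (u ^ m) c = affinePerm 1 c * affinePerm u 0 ^ m := by
      rw [affinePerm_zero_eq_toPermHom, ← map_zpow, ← affinePerm_zero_eq_toPermHom, affinePerm_mul,
        one_mul, mul_zero, zero_add]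
    rw [hsplit, htranslation]
    exact mul_mem (mul_mem (hgen _) (inv_mem hmul)) (zpow_mem hmul m)

end Affine

/-- For `p` prime and `(A_p, f)` affine connected with `t` of order `n` mod
`p`, every orbit of `Inn(A_p)` on `A_p × A_p` is of the form
`A(k) = {(i, i + t^l k) : i ∈ Z_p, 1 ≤ l ≤ n}` for some `k`, and `A(k₁) = A(k₂)` iff `k₁`
and `k₂` lie in the same coset of `⟨t⟩ ≤ Z_p^*` (or `k₁ = k₂ = 0`), i.e. iff
`k₂ = t^l * k₁` for some `l`. In particular there are exactly `1 + (p-1)/n` distinct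
orbits. -/
theorem stmt16 (p n : ℕ) (hp : p.Prime) (t : ZMod p) (ht0 : t ≠ 0) (ht1 : t ≠ 1)
    (horder : orderOf t = n)
    (Inn : Subgroup (Equiv.Perm (ZMod p)))
    (hInn : Inn = Subgroup.closure
      {σ : Equiv.Perm (ZMod p) | ∃ j : ZMod p, ∀ x, σ x = t * x + (1 - t) * j})
    (A : ZMod p → Set (ZMod p × ZMod p))
    (hA : ∀ k, A k = {q | ∃ (i : ZMod p) (l : ℕ), 1 ≤ l ∧ l ≤ n ∧ q = (i, i + t ^ l * k)}) :
    (∀ q : ZMod p × ZMod p, ∃ k : ZMod p, MulAction.orbit Inn q = A k) ∧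
    (∀ k₁ k₂ : ZMod p, A k₁ = A k₂ ↔ ∃ l : ℕ, k₂ = t ^ l * k₁) ∧
    Nat.card (Set.range A) = 1 + (p - 1) / n := by
  have : Fact p.Prime := ⟨hp⟩
  obtain ⟨u, rfl⟩ : ∃ u : (ZMod p)ˣ, (u : ZMod p) = t := ⟨Units.mk0 t ht0, rfl⟩
  have hu : IsOfFinOrder u := isOfFinOrder_of_finite u
  rw [orderOf_units] at horder
  subst horder
  set diff := fun r : ZMod p × ZMod p => r.2 - r.1
  have hA' : A = fun k => diff ⁻¹' orbit (zpowers u) k := by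
    funext k
    rw [hA]
    ext ⟨a, b⟩
    simp [diff, mem_orbit_zpowers_iff_exists_pow_le_orderOf hu, sub_eq_iff_eq_add']
  rw [closure_affine_generators_eq ht1] at hInn
  subst hInn hA'
  have hdiff : Function.Injective (Set.preimage diff) :=
    Set.preimage_injective.mpr fun x => ⟨(0, x), sub_zero x⟩
  refine ⟨fun q => ⟨q.2 - q.1, orbit_affineSubgroup _ q⟩, fun k₁ k₂ => ?_, ?_⟩
  · rw [hdiff.eq_iff, eq_comm, orbit_eq_iff, mem_orbit_zpowers_iff_exists_pow hu]
  · have hindex : (p - 1) / orderOf u = (zpowers u).index := by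
      refine Nat.div_eq_of_eq_mul_left hu.orderOf_pos ?_
      rw [← Nat.card_zpowers, index_mul_card, Nat.card_units, Nat.card_zmod]
    change Nat.card (Set.range (Set.preimage diff ∘ orbit (zpowers u))) = _
    rw [Set.range_comp, Nat.card_image_of_injective hdiff, card_range_orbit_eq_index_add_one,
      hindex, add_comm]
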